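/- Let d ∈ ℕ and let 𝒲 = (w^λ)_{λ>0} be a weight function system on ℝ^d satisfying (wM). Then 𝒲 satisfies (N) if and only if for every λ > 0 there exists μ > 0 such that ∑_{j∈ℤ^d} w^λ(j)/w^μ(j) < ∞. -/

import Mathlib

open MeasureTheory Filter ENNReal Asymptotics

noncomputable section

/-- Partial derivative in the `i`-th coordinate direction. -/
def pd (d : ℕ) (i : Fin d) (f : EuclideanSpace ℝ (Fin d) → ℂ) :
    EuclideanSpace ℝ (Fin d) → ℂ :=
  fun x => fderiv ℝ f x (EuclideanSpace.single i 1)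

/-- Iterated partial derivative in the `i`-th coordinate direction. -/
def pdPow (d : ℕ) (i : Fin d) :
    ℕ → (EuclideanSpace ℝ (Fin d) → ℂ) → EuclideanSpace ℝ (Fin d) → ℂ
  | 0, f => f
  | n + 1, f => pd d i (pdPow d i n f)

/-- Mixed partial derivative `∂^α` for a multi-index `α : Fin d → ℕ`. -/
def pdMulti (d : ℕ) (α : Fin d → ℕ) (f : EuclideanSpace ℝ (Fin d) → ℂ) :
    EuclideanSpace ℝ (Fin d) → ℂ :=
  (List.finRange d).foldr (fun i g => pdPow d i (α i) g) f

/-- The Gelfand–Shilov seminorm `‖φ‖_{𝒮^M_{w,q}}`, as an `ℝ≥0∞`-valued quantity: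
`sup_α ‖(∂^α φ)·w‖_{L^q} / M_α`. -/
def gsNorm (d : ℕ) (M : (Fin d → ℕ) → ℝ) (w : EuclideanSpace ℝ (Fin d) → ℝ)
    (q : ℝ≥0∞) (φ : EuclideanSpace ℝ (Fin d) → ℂ) : ℝ≥0∞ :=
  ⨆ α : Fin d → ℕ,
    eLpNorm (fun x => ‖pdMulti d α φ x‖ * w x) q volume / ENNReal.ofReal (M α)

/-- The lattice point of `ℤ^d` inside `ℝ^d`. -/
def intPt (d : ℕ) (j : Fin d → ℤ) : EuclideanSpace ℝ (Fin d) :=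
  (WithLp.equiv 2 (Fin d → ℝ)).symm fun i => (j i : ℝ)

/-- The associated function `ω_M(x) = sup_α log (|x^α| M_0 / M_α)` of a (multi-indexed)
sequence `M`. -/
def assocFun (d : ℕ) (M : (Fin d → ℕ) → ℝ) (x : EuclideanSpace ℝ (Fin d)) : ℝ :=
  ⨆ α : Fin d → ℕ, Real.log ((∏ i, |x i| ^ α i) * M 0 / M α)

/-- `w` is a weight function system on `ℝ^d`: each `w λ` (for `λ > 0`) is continuous, `≥ 1`,
and `w λ ≤ w μ` pointwise whenever `μ ≤ λ`. -/
structure IsWFS (d : ℕ) (w : ℝ → EuclideanSpace ℝ (Fin d) → ℝ) : Prop where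
  cont : ∀ l, 0 < l → Continuous (w l)
  one_le : ∀ l, 0 < l → ∀ x, 1 ≤ w l x
  mono : ∀ m l, 0 < m → m ≤ l → ∀ x, w l x ≤ w m x

/-- Condition (wM) (Beurling) for a weight function system. -/
def WFS_wM_B (d : ℕ) (w : ℝ → EuclideanSpace ℝ (Fin d) → ℝ) : Prop :=
  ∀ l, 0 < l → ∃ m, 0 < m ∧ ∃ C, 0 < C ∧
    ∀ x y : EuclideanSpace ℝ (Fin d), ‖y‖ ≤ 1 → w l (x + y) ≤ C * w m x

/-- Condition {wM} (Roumieu) for a weight function system. -/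
def WFS_wM_R (d : ℕ) (w : ℝ → EuclideanSpace ℝ (Fin d) → ℝ) : Prop :=
  ∀ m, 0 < m → ∃ l, 0 < l ∧ ∃ C, 0 < C ∧
    ∀ x y : EuclideanSpace ℝ (Fin d), ‖y‖ ≤ 1 → w l (x + y) ≤ C * w m x

/-- Condition (M) (Beurling) for a weight function system. -/
def WFS_M_B (d : ℕ) (w : ℝ → EuclideanSpace ℝ (Fin d) → ℝ) : Prop :=
  ∀ l, 0 < l → ∃ m, 0 < m ∧ ∃ n, 0 < n ∧ ∃ C, 0 < C ∧
    ∀ x y : EuclideanSpace ℝ (Fin d), w l (x + y) ≤ C * w m x * w n y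

/-- Condition (N) (Beurling) for a weight function system. -/
def WFS_N_B (d : ℕ) (w : ℝ → EuclideanSpace ℝ (Fin d) → ℝ) : Prop :=
  ∀ l, 0 < l → ∃ m, 0 < m ∧ Integrable (fun x => w l x / w m x) volume

/-- Condition {N} (Roumieu) for a weight function system. -/
def WFS_N_R (d : ℕ) (w : ℝ → EuclideanSpace ℝ (Fin d) → ℝ) : Prop :=
  ∀ m, 0 < m → ∃ l, 0 < l ∧ Integrable (fun x => w l x / w m x) volume

/-- `M` is a weight sequence system on `ℝ^d`: each `M λ` (for `λ > 0`) is a positive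
sequence with `(M^λ_α)^{1/|α|} → ∞` satisfying the log-convexity condition (M.1), and
`M^λ_α ≤ M^μ_α` whenever `λ ≤ μ`. -/
structure IsWSS (d : ℕ) (M : ℝ → (Fin d → ℕ) → ℝ) : Prop where
  pos : ∀ l, 0 < l → ∀ α, 0 < M l α
  growth : ∀ l, 0 < l → ∀ R : ℝ, 0 < R → ∃ N : ℕ, ∀ α : Fin d → ℕ,
    N ≤ ∑ i, α i → R ^ (∑ i, α i) ≤ M l α
  logconvex : ∀ l, 0 < l → ∀ (α : Fin d → ℕ) (j : Fin d),
    M l (α + Pi.single j 1) ^ 2 ≤ M l α * M l (α + Pi.single j 2)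
  mono : ∀ l m, 0 < l → l ≤ m → ∀ α, M l α ≤ M m α

/-- Condition (L) (Beurling) for a weight sequence system. -/
def WSS_L_B (d : ℕ) (M : ℝ → (Fin d → ℕ) → ℝ) : Prop :=
  ∀ R : ℝ, 0 < R → ∀ l, 0 < l → ∃ m, 0 < m ∧ ∃ C, 0 < C ∧
    ∀ α : Fin d → ℕ, R ^ (∑ i, α i) * M m α ≤ C * M l α

/-- Condition {L} (Roumieu) for a weight sequence system. -/
def WSS_L_R (d : ℕ) (M : ℝ → (Fin d → ℕ) → ℝ) : Prop :=
  ∀ R : ℝ, 0 < R → ∀ m, 0 < m → ∃ l, 0 < l ∧ ∃ C, 0 < C ∧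
    ∀ α : Fin d → ℕ, R ^ (∑ i, α i) * M m α ≤ C * M l α

/-- Condition (𝔐.2)' (Beurling) for a weight sequence system. -/
def WSS_M2_B (d : ℕ) (M : ℝ → (Fin d → ℕ) → ℝ) : Prop :=
  ∀ l, 0 < l → ∃ m, 0 < m ∧ ∃ C, 0 < C ∧ ∃ H, 0 < H ∧
    ∀ (α : Fin d → ℕ) (j : Fin d),
      M m (α + Pi.single j 1) ≤ C * H ^ (∑ i, α i) * M l α

/-- Condition {𝔐.2}' (Roumieu) for a weight sequence system. -/
def WSS_M2_R (d : ℕ) (M : ℝ → (Fin d → ℕ) → ℝ) : Prop :=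
  ∀ m, 0 < m → ∃ l, 0 < l ∧ ∃ C, 0 < C ∧ ∃ H, 0 < H ∧
    ∀ (α : Fin d → ℕ) (j : Fin d),
      M l (α + Pi.single j 1) ≤ C * H ^ (∑ i, α i) * M m α

/-- A weight sequence system is accelerating if `M^λ_{α+e_j}/M^λ_α ≤ M^μ_{α+e_j}/M^μ_α`
for `λ ≤ μ`. -/
def WSSAccel (d : ℕ) (M : ℝ → (Fin d → ℕ) → ℝ) : Prop :=
  ∀ l m, 0 < l → l ≤ m → ∀ (α : Fin d → ℕ) (j : Fin d),
    M l (α + Pi.single j 1) / M l α ≤ M m (α + Pi.single j 1) / M m α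

/-- A weight sequence system is isotropically decomposable: there is a partition of the `d`
coordinates into `k` blocks (equivalently, after a permutation of the coordinates, a
decomposition `ℕ^d = ℕ^{d_1} × ⋯ × ℕ^{d_k}`) and positive functions `m^λ_j : ℕ → (0,∞)` with
`M^λ_α = ∏_j m^λ_j (|α^{(j)}|)`. -/
def IsoDecomposable (d : ℕ) (M : ℝ → (Fin d → ℕ) → ℝ) : Prop :=
  ∃ (k : ℕ) (b : Fin d → Fin k) (m : ℝ → Fin k → ℕ → ℝ),
    (∀ l, 0 < l → ∀ j n, 0 < m l j n) ∧
    ∀ l, 0 < l → ∀ α : Fin d → ℕ,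
      M l α = ∏ j, m l j (∑ i ∈ Finset.univ.filter fun i => b i = j, α i)

/-- Membership in the Beurling Gelfand–Shilov class `𝒮^{(𝔐)}_{(𝒲),q}`. -/
def gsBeurling (d : ℕ) (M : ℝ → (Fin d → ℕ) → ℝ) (w : ℝ → EuclideanSpace ℝ (Fin d) → ℝ)
    (q : ℝ≥0∞) (φ : EuclideanSpace ℝ (Fin d) → ℂ) : Prop :=
  ContDiff ℝ (⊤ : ℕ∞) φ ∧ ∀ l, 0 < l → gsNorm d (M l) (w l) q φ < ⊤

/-- Membership in the Roumieu Gelfand–Shilov class `𝒮^{{𝔐}}_{{𝒲},q}`. -/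
def gsRoumieu (d : ℕ) (M : ℝ → (Fin d → ℕ) → ℝ) (w : ℝ → EuclideanSpace ℝ (Fin d) → ℝ)
    (q : ℝ≥0∞) (φ : EuclideanSpace ℝ (Fin d) → ℂ) : Prop :=
  ContDiff ℝ (⊤ : ℕ∞) φ ∧ ∃ l, 0 < l ∧ gsNorm d (M l) (w l) q φ < ⊤

/-- Membership in the auxiliary space `𝒮̃^{(𝔐)}_{(𝒲)}`. -/
def gsTilde (d : ℕ) (M : ℝ → (Fin d → ℕ) → ℝ) (w : ℝ → EuclideanSpace ℝ (Fin d) → ℝ)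
    (ψ : EuclideanSpace ℝ (Fin d) → ℂ) : Prop :=
  ContDiff ℝ (⊤ : ℕ∞) ψ ∧ ∀ l, 0 < l → ∀ k : ℕ, ∃ C : ℝ,
    ∀ (α : Fin d → ℕ) (x : EuclideanSpace ℝ (Fin d)),
      ‖pdMulti d α ψ x‖ * (1 + ‖x‖) ^ k * w l x / M l α ≤ C

end

/-!
Iterating (wM) gives `w^λ(x + y) ≤ C w^μ(x)` for all `|y| ≤ R`, for any fixed `R`. Applied once
forwards and once backwards, this bounds `w^λ/w^μ` at any point of a unit cube `j + [0,1)^d` by a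
constant times `w^a/w^b` at any other point of the cube, for suitable shifted indices `a`, `b`.
Since these cubes tile `ℝ^d` and have volume one, the integral of one quotient and the lattice sum
of the other dominate each other.
-/

open Set

section WeightFunctionSystem

variable {d : ℕ} {w : ℝ → EuclideanSpace ℝ (Fin d) → ℝ}

theorem IsWFS.pos (hW : IsWFS d w) {l : ℝ} (hl : 0 < l) (x : EuclideanSpace ℝ (Fin d)) :
    0 < w l x :=
  one_pos.trans_le (hW.one_le l hl x)

theorem WFS_wM_B.iterate (hwM : WFS_wM_B d w) (n : ℕ) {l : ℝ} (hl : 0 < l) :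
    ∃ m, 0 < m ∧ ∃ C, 0 < C ∧
      ∀ x y : EuclideanSpace ℝ (Fin d), ‖y‖ ≤ n → w l (x + y) ≤ C * w m x := by
  induction n generalizing l with
  | zero =>
    refine ⟨l, hl, 1, one_pos, fun x y hy => ?_⟩
    simp [norm_le_zero_iff.mp (by exact_mod_cast hy)]
  | succ n ih =>
    obtain ⟨m₁, hm₁, C₁, hC₁, h₁⟩ := hwM l hl
    obtain ⟨m, hm, C, hC, h⟩ := ih hm₁
    refine ⟨m, hm, C₁ * C, by positivity, fun x y hy => ?_⟩
    have hn : (0 : ℝ) < n + 1 := by positivity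
    have hy' : ‖y‖ ≤ n + 1 := by exact_mod_cast hy
    have hsplit : x + y = (x + (n / (n + 1) : ℝ) • y) + (1 / (n + 1) : ℝ) • y := by
      rw [add_assoc, ← add_smul, ← add_div, div_self hn.ne', one_smul]
    have hlong : ‖(n / (n + 1) : ℝ) • y‖ ≤ n := by
      rw [norm_smul, Real.norm_of_nonneg (by positivity), div_mul_eq_mul_div, div_le_iff₀ hn]
      gcongr
    have hshort : ‖(1 / (n + 1) : ℝ) • y‖ ≤ 1 := by
      rw [norm_smul, Real.norm_of_nonneg (by positivity), one_div_mul_eq_div, div_le_one hn]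
      exact hy'
    calc w l (x + y) ≤ C₁ * w m₁ (x + (n / (n + 1) : ℝ) • y) := hsplit ▸ h₁ _ _ hshort
      _ ≤ C₁ * (C * w m x) := by gcongr; exact h _ _ hlong
      _ = C₁ * C * w m x := by ring

theorem IsWFS.exists_div_le (hW : IsWFS d w) (hwM : WFS_wM_B d w) (R : ℝ) {l : ℝ} (hl : 0 < l) :
    ∃ a, 0 < a ∧ ∀ b, 0 < b → ∃ m, 0 < m ∧ ∃ C,
      ∀ x y : EuclideanSpace ℝ (Fin d), ‖y‖ ≤ R →
        w l (x + y) / w m (x + y) ≤ C * (w a x / w b x) := by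
  obtain ⟨a, ha, C₁, -, h₁⟩ := hwM.iterate ⌈R⌉₊ hl
  refine ⟨a, ha, fun b hb => ?_⟩
  obtain ⟨m, hm, C₂, hC₂, h₂⟩ := hwM.iterate ⌈R⌉₊ hb
  refine ⟨m, hm, C₁ * C₂, fun x y hy => ?_⟩
  have hyR : ‖y‖ ≤ ⌈R⌉₊ := hy.trans (Nat.le_ceil R)
  have hnum : w l (x + y) ≤ C₁ * w a x := h₁ x y hyR
  have hden : w b x / C₂ ≤ w m (x + y) := by
    rw [div_le_iff₀' hC₂]
    simpa using h₂ (x + y) (-y) (by simpa using hyR)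
  calc w l (x + y) / w m (x + y) ≤ C₁ * w a x / (w b x / C₂) :=
        div_le_div₀ (by nlinarith [hW.pos hl (x + y)]) hnum
          (div_pos (hW.pos hb x) hC₂) hden
    _ = C₁ * C₂ * (w a x / w b x) := by field_simp

end WeightFunctionSystem

theorem EuclideanSpace.norm_le_sqrt_card {ι : Type*} [Fintype ι] {v : EuclideanSpace ℝ ι}
    (h : ∀ i, ‖v i‖ ≤ 1) : ‖v‖ ≤ √(Fintype.card ι) := by
  rw [EuclideanSpace.norm_eq]
  gcongr
  calc ∑ i, ‖v i‖ ^ 2 ≤ ∑ _i : ι, (1 : ℝ) :=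
        Finset.sum_le_sum fun i _ => pow_le_one₀ (norm_nonneg _) (h i)
    _ = Fintype.card ι := by simp

section LatticeCube

variable {d : ℕ}

def latCube (d : ℕ) (j : Fin d → ℤ) : Set (EuclideanSpace ℝ (Fin d)) :=
  WithLp.ofLp ⁻¹' univ.pi fun i => Ico (j i : ℝ) (j i + 1)

theorem mem_latCube {j : Fin d → ℤ} {x : EuclideanSpace ℝ (Fin d)} :
    x ∈ latCube d j ↔ ∀ i, x i ∈ Ico (j i : ℝ) (j i + 1) := by
  simp [latCube]

theorem mem_latCube_iff_floor {j : Fin d → ℤ} {x : EuclideanSpace ℝ (Fin d)} :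
    x ∈ latCube d j ↔ (fun i => ⌊x i⌋) = j := by
  simp only [mem_latCube, mem_Ico, funext_iff, Int.floor_eq_iff]

theorem measurableSet_latCube (j : Fin d → ℤ) : MeasurableSet (latCube d j) :=
  (PiLp.volume_preserving_ofLp (Fin d)).measurable
    (MeasurableSet.univ_pi fun _ => measurableSet_Ico)

theorem volume_latCube (j : Fin d → ℤ) : volume (latCube d j) = 1 := by
  rw [latCube, (PiLp.volume_preserving_ofLp (Fin d)).measure_preimage
    (MeasurableSet.univ_pi fun _ => measurableSet_Ico).nullMeasurableSet, volume_pi_pi]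
  simp [Real.volume_Ico]

theorem iUnion_latCube : ⋃ j, latCube d j = univ :=
  eq_univ_of_forall fun x => mem_iUnion.mpr ⟨fun i => ⌊x i⌋, mem_latCube_iff_floor.mpr rfl⟩

theorem pairwise_disjoint_latCube : Pairwise (Function.onFun Disjoint (latCube d)) :=
  fun _ _ hjk => disjoint_left.mpr fun _ hj hk =>
    hjk ((mem_latCube_iff_floor.mp hj).symm.trans (mem_latCube_iff_floor.mp hk))

theorem norm_sub_intPt_le_sqrt {j : Fin d → ℤ} {x : EuclideanSpace ℝ (Fin d)}
    (hx : x ∈ latCube d j) : ‖x - intPt d j‖ ≤ √d := by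
  refine (EuclideanSpace.norm_le_sqrt_card fun i => ?_).trans_eq (by simp)
  have hi := mem_latCube.mp hx i
  have hj : intPt d j i = j i := rfl
  rw [PiLp.sub_apply, hj, Real.norm_eq_abs, abs_le]
  constructor <;> linarith [hi.1, hi.2]

theorem lintegral_eq_tsum_latCube (f : EuclideanSpace ℝ (Fin d) → ℝ≥0∞) :
    ∫⁻ x, f x = ∑' j, ∫⁻ x in latCube d j, f x := by
  rw [← lintegral_iUnion measurableSet_latCube pairwise_disjoint_latCube, iUnion_latCube,
    Measure.restrict_univ]

theorem setLIntegral_latCube_const (j : Fin d → ℤ) (c : ℝ≥0∞) :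
    ∫⁻ _ in latCube d j, c = c := by
  rw [setLIntegral_const, volume_latCube, mul_one]

theorem summable_of_le_integrable_on_latCube {f : EuclideanSpace ℝ (Fin d) → ℝ}
    {g : (Fin d → ℤ) → ℝ} (hf : Integrable f) (hg : ∀ j, 0 ≤ g j)
    (hgf : ∀ j, ∀ x ∈ latCube d j, g j ≤ f x) : Summable g := by
  have hle : ∑' j, ENNReal.ofReal (g j) ≤ ∫⁻ x, ENNReal.ofReal (f x) := by
    rw [lintegral_eq_tsum_latCube]
    refine ENNReal.tsum_le_tsum fun j => ?_
    calc ENNReal.ofReal (g j) = ∫⁻ _ in latCube d j, ENNReal.ofReal (g j) :=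
          (setLIntegral_latCube_const j _).symm
      _ ≤ ∫⁻ x in latCube d j, ENNReal.ofReal (f x) :=
          setLIntegral_mono' (measurableSet_latCube j) fun x hx =>
            ENNReal.ofReal_le_ofReal (hgf j x hx)
  refine (ENNReal.summable_toReal (hle.trans_lt hf.lintegral_lt_top).ne).congr fun j => ?_
  exact ENNReal.toReal_ofReal (hg j)

theorem integrable_of_le_summable_on_latCube {f : EuclideanSpace ℝ (Fin d) → ℝ}
    {g : (Fin d → ℤ) → ℝ} (hf : AEStronglyMeasurable f) (hg : Summable g)
    (hfg : ∀ j, ∀ x ∈ latCube d j, ‖f x‖ ≤ g j) : Integrable f := by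
  refine ⟨hf, (hasFiniteIntegral_iff_norm f).mpr ?_⟩
  calc ∫⁻ x, ENNReal.ofReal ‖f x‖ = ∑' j, ∫⁻ x in latCube d j, ENNReal.ofReal ‖f x‖ :=
        lintegral_eq_tsum_latCube _
    _ ≤ ∑' j, ENNReal.ofReal (g j) := ENNReal.tsum_le_tsum fun j =>
        (setLIntegral_mono' (measurableSet_latCube j) fun x hx =>
          ENNReal.ofReal_le_ofReal (hfg j x hx)).trans_eq (setLIntegral_latCube_const j _)
    _ < ⊤ := hg.tsum_ofReal_lt_top

end LatticeCube

/-- For a weight function system `𝒲` on `ℝ^d` satisfying (wM), condition (N) holds iff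
for every `λ > 0` there is `μ > 0` with `∑_{j ∈ ℤ^d} w^λ(j)/w^μ(j) < ∞`. -/
theorem stmt1 (d : ℕ) (w : ℝ → EuclideanSpace ℝ (Fin d) → ℝ)
    (hW : IsWFS d w) (hwM : WFS_wM_B d w) :
    WFS_N_B d w ↔
      ∀ l, 0 < l → ∃ m, 0 < m ∧
        Summable fun j : Fin d → ℤ => w l (intPt d j) / w m (intPt d j) := by
  constructor
  · intro hN l hl
    obtain ⟨a, ha, hdiv⟩ := hW.exists_div_le hwM √d hl
    obtain ⟨b, hb, hint⟩ := hN a ha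
    obtain ⟨m, hm, C, hC⟩ := hdiv b hb
    refine ⟨m, hm, summable_of_le_integrable_on_latCube (hint.const_mul C)
      (fun j => (div_pos (hW.pos hl _) (hW.pos hm _)).le) fun j x hx => ?_⟩
    simpa using hC x (intPt d j - x) (by rw [norm_sub_rev]; exact norm_sub_intPt_le_sqrt hx)
  · intro hS l hl
    obtain ⟨a, ha, hdiv⟩ := hW.exists_div_le hwM √d hl
    obtain ⟨b, hb, hsum⟩ := hS a ha
    obtain ⟨m, hm, C, hC⟩ := hdiv b hb
    have hcont : Continuous fun x => w l x / w m x :=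
      (hW.cont l hl).div (hW.cont m hm) fun x => (hW.pos hm x).ne'
    refine ⟨m, hm, integrable_of_le_summable_on_latCube hcont.aestronglyMeasurable
      (hsum.mul_left C) fun j x hx => ?_⟩
    rw [Real.norm_of_nonneg (div_pos (hW.pos hl x) (hW.pos hm x)).le]
    simpa using hC (intPt d j) (x - intPt d j) (norm_sub_intPt_le_sqrt hx)
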